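/- arXiv:1906.09839 — 2 statements merged into one kernel-verified Lean document; each statement's English description precedes it below -/
import Mathlib

section
/- Singular Gronwall lemma: let φ : [0,T] → [0,∞) be bounded measurable, a ≥ 0, C ≥ 0, and suppose φ(t) ≤ a + C ∫_t^T (s−t)^{−1/2} φ(s) ds for all t ∈ [0,T]. Then there exists a constant C′ depending only on C and T such that φ(t) ≤ C′ a for all t ∈ [0,T]. -/
open MeasureTheory

noncomputable section

private def grB (c : ℝ) : ℕ → ℝ
  | 0 => 1
  | (k+1) => 2 + c * grB c k

private lemma grB_nonneg {c : ℝ} (hc : 0 ≤ c) : ∀ k, 0 ≤ grB c k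
  | 0 => by norm_num [grB]
  | (k+1) => by
      have := grB_nonneg hc k
      simp only [grB]
      positivity

private lemma ker_integrable (t u : ℝ) :
    IntegrableOn (fun s => (s - t) ^ (-(1:ℝ)/2)) (Set.Ioc t u) := by
  rcases le_or_gt t u with h | h
  · have h1 : IntervalIntegrable (fun x : ℝ => x ^ (-(1:ℝ)/2)) volume 0 (u - t) :=
      intervalIntegral.intervalIntegrable_rpow' (by norm_num)
    have h2 := h1.comp_sub_right t
    rw [zero_add, sub_add_cancel] at h2
    exact (intervalIntegrable_iff_integrableOn_Ioc_of_le h).1 h2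
  · rw [Set.Ioc_eq_empty (not_lt.2 h.le)]
    exact integrableOn_empty

private lemma ker_mul_integrable (φ : ℝ → ℝ) (hφ : Measurable φ) (M : ℝ)
    (h0 : ∀ x, 0 ≤ φ x) (hM : ∀ x, φ x ≤ M) (t u : ℝ) :
    IntegrableOn (fun s => (s - t) ^ (-(1:ℝ)/2) * φ s) (Set.Ioc t u) := by
  have h2 := Integrable.bdd_mul (ker_integrable t u)
    (hφ.aestronglyMeasurable.restrict)
    (c := max M 0) (ae_of_all _ fun x => by
      rw [Real.norm_eq_abs, abs_of_nonneg (h0 x)]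
      exact le_max_of_le_left (hM x))
  exact h2.congr (ae_of_all _ fun x => mul_comm _ _)

private lemma ker_integral (t u : ℝ) (h : t ≤ u) :
    ∫ s in Set.Ioc t u, (s - t) ^ (-(1:ℝ)/2) = 2 * Real.sqrt (u - t) := by
  rw [← intervalIntegral.integral_of_le h]
  rw [intervalIntegral.integral_comp_sub_right (fun x : ℝ => x ^ (-(1:ℝ)/2)) t]
  rw [sub_self]
  rw [integral_rpow (Or.inl (by norm_num))]
  have h1 : (-(1:ℝ)/2 + 1) = 1/2 := by norm_num
  rw [h1, Real.zero_rpow (by norm_num), Real.sqrt_eq_rpow]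
  ring

/-- Singular Gronwall lemma: if `φ : [0,T] → [0,∞)` is bounded measurable and satisfies
`φ(t) ≤ a + C ∫_t^T (s−t)^{−1/2} φ(s) ds` for all `t ∈ [0,T]`, then `φ(t) ≤ C′ a` on `[0,T]`
for a constant `C′` depending only on `C` and `T`. -/
theorem singular_gronwall (C T : ℝ) (hC : 0 ≤ C) (hT : 0 ≤ T) :
    ∃ C' : ℝ, ∀ (a : ℝ) (φ : ℝ → ℝ), 0 ≤ a → Measurable φ → (∀ t, 0 ≤ φ t) →
      (∃ M : ℝ, ∀ t, φ t ≤ M) →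
      (∀ t ∈ Set.Icc (0:ℝ) T,
        φ t ≤ a + C * ∫ s in Set.Ioc t T, (s - t) ^ (-(1:ℝ)/2) * φ s) →
      ∀ t ∈ Set.Icc (0:ℝ) T, φ t ≤ C' * a := by
  obtain ⟨δ, hδpos, hδ⟩ : ∃ δ : ℝ, 0 < δ ∧ 2 * C * Real.sqrt δ ≤ 1/2 := by
    refine ⟨(16*C^2+1)⁻¹, by positivity, ?_⟩
    have hp : (0:ℝ) < 16*C^2+1 := by positivity
    have h1 : (2 * C * Real.sqrt ((16*C^2+1)⁻¹))^2 ≤ (1/2)^2 := by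
      have hs : Real.sqrt ((16*C^2+1)⁻¹) ^ 2 = (16*C^2+1)⁻¹ :=
        Real.sq_sqrt (by positivity)
      have h2 : (2 * C * Real.sqrt ((16*C^2+1)⁻¹))^2 = 4*C^2 * (16*C^2+1)⁻¹ := by
        rw [mul_pow, mul_pow, hs]; ring
      rw [h2]
      rw [mul_inv_le_iff₀ hp]
      nlinarith
    have h3 : 0 ≤ 2 * C * Real.sqrt ((16*C^2+1)⁻¹) := by positivity
    nlinarith [h1, h3]
  have hsq : 0 < Real.sqrt δ := Real.sqrt_pos.2 hδpos
  set c : ℝ := 2 * C * T / Real.sqrt δ with hcdef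
  have hc0 : 0 ≤ c := by positivity
  refine ⟨grB c ⌈T/δ⌉₊, ?_⟩
  rintro a φ ha hφm hφ0 ⟨M, hM⟩ hineq
  have key : ∀ k : ℕ, ∀ t ∈ Set.Icc (max 0 (T - (k:ℝ)*δ)) T, φ t ≤ a * grB c k := by
    intro k
    induction k with
    | zero =>
      intro t ht
      simp only [Nat.cast_zero, zero_mul, sub_zero, max_eq_right hT] at ht
      have htT : t = T := le_antisymm ht.2 ht.1
      have := hineq t ⟨htT ▸ hT, ht.2⟩
      rw [htT] at this ⊢
      rw [Set.Ioc_self, Measure.restrict_empty, integral_zero_measure] at this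
      simpa [grB] using this
    | succ k ih =>
      intro t ht
      set I := Set.Icc (max 0 (T - ((k:ℝ)+1)*δ)) T with hIdef
      have htI : t ∈ I := by
        simp only [hIdef]
        convert ht using 3
        push_cast; ring
      have hIT : T ∈ I := by
        constructor
        · exact max_le hT (by nlinarith)
        · exact le_refl T
      set S := sSup (φ '' I) with hSdef
      have hbdd : BddAbove (φ '' I) := ⟨M, by rintro _ ⟨x, _, rfl⟩; exact hM x⟩
      have hS_ge : ∀ x ∈ I, φ x ≤ S := fun x hx => le_csSup hbdd ⟨x, hx, rfl⟩
      have hS0 : 0 ≤ S := le_trans (hφ0 T) (hS_ge T hIT)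
      have hIne : (φ '' I).Nonempty := ⟨φ T, T, hIT, rfl⟩
      -- pointwise claim on I
      have claim : ∀ t' ∈ I, φ t' ≤ a + (1/2) * S + (c/2) * (a * grB c k) := by
        intro t' ht'
        have ht'0 : 0 ≤ t' := le_trans (le_max_left _ _) ht'.1
        have ht'T : t' ≤ T := ht'.2
        have ht'low : T - ((k:ℝ)+1)*δ ≤ t' := le_trans (le_max_right _ _) ht'.1
        set u : ℝ := min (t' + δ) T with hu
        have htu : t' ≤ u := le_min (by linarith) ht'T
        have huT : u ≤ T := min_le_right _ _
        have hint : IntegrableOn (fun s => (s - t') ^ (-(1:ℝ)/2) * φ s) (Set.Ioc t' T) :=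
          ker_mul_integrable φ hφm M hφ0 hM t' T
        have hint1 : IntegrableOn (fun s => (s - t') ^ (-(1:ℝ)/2) * φ s) (Set.Ioc t' u) :=
          hint.mono_set (Set.Ioc_subset_Ioc_right huT)
        have hint2 : IntegrableOn (fun s => (s - t') ^ (-(1:ℝ)/2) * φ s) (Set.Ioc u T) :=
          hint.mono_set (Set.Ioc_subset_Ioc_left htu)
        have hsplit : (∫ s in Set.Ioc t' T, (s - t') ^ (-(1:ℝ)/2) * φ s)
            = (∫ s in Set.Ioc t' u, (s - t') ^ (-(1:ℝ)/2) * φ s)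
              + ∫ s in Set.Ioc u T, (s - t') ^ (-(1:ℝ)/2) * φ s := by
          rw [← Set.Ioc_union_Ioc_eq_Ioc htu huT]
          exact setIntegral_union (Set.Ioc_disjoint_Ioc_of_le le_rfl) measurableSet_Ioc hint1 hint2
        have hnear : (∫ s in Set.Ioc t' u, (s - t') ^ (-(1:ℝ)/2) * φ s)
            ≤ 2 * Real.sqrt δ * S := by
          have step1 : (∫ s in Set.Ioc t' u, (s - t') ^ (-(1:ℝ)/2) * φ s)
              ≤ ∫ s in Set.Ioc t' u, (s - t') ^ (-(1:ℝ)/2) * S := by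
            refine setIntegral_mono_on hint1 ((ker_integrable t' u).mul_const S)
              measurableSet_Ioc ?_
            intro s hs
            have hs0 : (0:ℝ) ≤ (s - t') ^ (-(1:ℝ)/2) :=
              Real.rpow_nonneg (by linarith [hs.1]) _
            refine mul_le_mul_of_nonneg_left (hS_ge s ⟨?_, le_trans hs.2 huT⟩) hs0
            exact le_trans ht'.1 hs.1.le
          have step2 : (∫ s in Set.Ioc t' u, (s - t') ^ (-(1:ℝ)/2) * S)
              = 2 * Real.sqrt (u - t') * S := by
            rw [integral_mul_const, ker_integral t' u htu]
          have step3 : 2 * Real.sqrt (u - t') * S ≤ 2 * Real.sqrt δ * S := by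
            have : Real.sqrt (u - t') ≤ Real.sqrt δ :=
              Real.sqrt_le_sqrt (by simp only [hu]; have := min_le_left (t' + δ) T; linarith)
            nlinarith
          linarith
        have hfar : (∫ s in Set.Ioc u T, (s - t') ^ (-(1:ℝ)/2) * φ s)
            ≤ T * ((Real.sqrt δ)⁻¹ * (a * grB c k)) := by
          have hgB := grB_nonneg hc0 k
          have hcst : (0:ℝ) ≤ (Real.sqrt δ)⁻¹ * (a * grB c k) := by positivity
          have step1 : (∫ s in Set.Ioc u T, (s - t') ^ (-(1:ℝ)/2) * φ s)
              ≤ ∫ _s in Set.Ioc u T, (Real.sqrt δ)⁻¹ * (a * grB c k) := by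
            refine setIntegral_mono_on hint2
              (integrableOn_const measure_Ioc_lt_top.ne) measurableSet_Ioc ?_
            intro s hs
            have hsT : s ≤ T := hs.2
            have hus : u < s := hs.1
            have hult : u < T := lt_of_lt_of_le hus hsT
            have humin : u = t' + δ := by
              rcases min_cases (t' + δ) T with ⟨h1, _⟩ | ⟨h1, h2⟩
              · exact h1
              · exfalso
                have hx : (t' + δ) ⊓ T < T := hult
                rw [h1] at hx
                exact lt_irrefl T hx
            have hsd : δ < s - t' := by rw [humin] at hus; linarith
            have hK : (s - t') ^ (-(1:ℝ)/2) ≤ (Real.sqrt δ)⁻¹ := by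
              have h1 : (s - t') ^ (-(1:ℝ)/2) ≤ δ ^ (-(1:ℝ)/2) :=
                Real.rpow_le_rpow_of_nonpos hδpos hsd.le (by norm_num)
              have h2 : δ ^ (-(1:ℝ)/2) = (Real.sqrt δ)⁻¹ := by
                rw [Real.sqrt_eq_rpow, ← Real.rpow_neg hδpos.le]
                norm_num
              linarith [h1, h2.le, h2.ge]
            have hφs : φ s ≤ a * grB c k := by
              refine ih s ⟨?_, hsT⟩
              refine max_le ?_ ?_
              · rw [humin] at hus; linarith
              · rw [humin] at hus; linarith
            calc (s - t') ^ (-(1:ℝ)/2) * φ s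
                ≤ (Real.sqrt δ)⁻¹ * φ s :=
                  mul_le_mul_of_nonneg_right hK (hφ0 s)
              _ ≤ (Real.sqrt δ)⁻¹ * (a * grB c k) :=
                  mul_le_mul_of_nonneg_left hφs (by positivity)
          have step2 : (∫ _s in Set.Ioc u T, (Real.sqrt δ)⁻¹ * (a * grB c k))
              ≤ T * ((Real.sqrt δ)⁻¹ * (a * grB c k)) := by
            rw [setIntegral_const, Real.volume_real_Ioc, smul_eq_mul]
            have h' : max (T - u) 0 ≤ T := max_le (by linarith [htu, ht'0]) hT
            have h'' : 0 ≤ max (T - u) 0 := le_max_right _ _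
            nlinarith [hcst]
          linarith
        have h1 := hineq t' ⟨ht'0, ht'T⟩
        have hCmul : C * (∫ s in Set.Ioc t' T, (s - t') ^ (-(1:ℝ)/2) * φ s)
            ≤ C * (2 * Real.sqrt δ * S + T * ((Real.sqrt δ)⁻¹ * (a * grB c k))) := by
          refine mul_le_mul_of_nonneg_left ?_ hC
          rw [hsplit]; linarith
        have hA : C * (2 * Real.sqrt δ * S) ≤ (1/2) * S := by nlinarith
        have hB : C * (T * ((Real.sqrt δ)⁻¹ * (a * grB c k))) = (c/2) * (a * grB c k) := by
          rw [hcdef]; field_simp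
        rw [mul_add] at hCmul
        linarith [h1, hCmul, hA, hB.le, hB.ge]
      have hSle : S ≤ 2*a + c * (a * grB c k) := by
        have h1 : S ≤ a + (1/2) * S + (c/2) * (a * grB c k) := by
          refine csSup_le hIne ?_
          rintro _ ⟨x, hx, rfl⟩
          exact claim x hx
        linarith
      have : φ t ≤ S := hS_ge t htI
      have hrec : a * grB c (k+1) = 2*a + c * (a * grB c k) := by
        simp only [grB]; ring
      rw [hrec]; linarith
  intro t ht
  have hmax : max 0 (T - (⌈T/δ⌉₊ : ℝ) * δ) = 0 := by
    refine max_eq_left ?_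
    have h1 : T / δ ≤ (⌈T/δ⌉₊ : ℝ) := Nat.le_ceil _
    have h2 : T ≤ (⌈T/δ⌉₊ : ℝ) * δ := by
      rw [div_le_iff₀ hδpos] at h1; linarith
    linarith
  have := key ⌈T/δ⌉₊ t (by rw [hmax]; exact ht)
  linarith [this, mul_comm a (grB c ⌈T/δ⌉₊)]
end
end

section
/- Second-order Taylor expansion via optimal transport: let Φ : P(𝕋^d) → ℝ have a linear functional derivative δΦ/δm(μ, x) which is C¹ in x, and suppose the map μ ↦ ∂_x (δΦ/δm)(μ, ·) satisfies sup_x |∂_x(δΦ/δm)(μ₁,x) − ∂_x(δΦ/δm)(μ₂,x)| ≤ K · W₁(μ₁,μ₂) for all μ₁, μ₂. Then for all probability measures μ, ν, |Φ(ν) − Φ(μ) − ∫ (δΦ/δm)(μ, y) (ν − μ)(dy)| ≤ C K · W₁(μ, ν)² for a universal constant C (one may take C = 1). -/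
open MeasureTheory
open scoped NNReal ENNReal

noncomputable section

/-- The `d`-dimensional torus `𝕋^d = ℝ^d/ℤ^d`. -/
abbrev Torus (d : ℕ) := Fin d → UnitAddCircle

/-- Canonical projection `ℝ^d → 𝕋^d`. -/
def TorusProj (d : ℕ) : (Fin d → ℝ) → Torus d := fun x i => (x i : UnitAddCircle)

/-- The 1-Wasserstein distance, defined as the infimum over couplings `π` of `μ` and `ν`
of `∫ d(x,y) π(dx,dy)`. -/
def W1 {X : Type*} [MeasurableSpace X] [PseudoMetricSpace X] (μ ν : Measure X) : ℝ :=
  sInf { c | ∃ π : Measure (X × X), IsProbabilityMeasure π ∧ π.fst = μ ∧ π.snd = ν ∧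
      c = ∫ p, dist p.1 p.2 ∂π }

namespace SecondOrderTaylorAux

variable {d : ℕ}

instance : BorelSpace (Torus d × Torus d) := Prod.borelSpace

lemma UnitAddCircle.exists_lift (a b : UnitAddCircle) :
    ∃ A B : ℝ, (A : UnitAddCircle) = a ∧ (B : UnitAddCircle) = b ∧ |A - B| = dist a b := by
  obtain ⟨A, rfl⟩ := QuotientAddGroup.mk_surjective a
  obtain ⟨r, hr⟩ := QuotientAddGroup.mk_surjective ((A : UnitAddCircle) - b)
  have hround : (((round r : ℝ)) : UnitAddCircle) = 0 := by
    rw [AddCircle.coe_eq_zero_iff]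
    exact ⟨round r, by simp⟩
  have hcoe : ((r - (round r : ℝ) : ℝ) : UnitAddCircle)
      = (r : UnitAddCircle) - ((round r : ℝ) : UnitAddCircle) := rfl
  refine ⟨A, A - (r - round r), rfl, ?_, ?_⟩
  · have h2 : ((A - (r - (round r:ℝ)) : ℝ) : UnitAddCircle)
        = (A : UnitAddCircle) - ((r - (round r:ℝ) : ℝ) : UnitAddCircle) := rfl
    rw [h2, hcoe, hround, sub_zero, hr]
    abel
  · have h3 : A - (A - (r - round r)) = r - round r := by ring
    rw [h3, dist_eq_norm, ← hr]
    exact (_root_.UnitAddCircle.norm_eq).symm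

lemma Torus.exists_lift (x y : Torus d) :
    ∃ X Y : Fin d → ℝ, TorusProj d X = x ∧ TorusProj d Y = y ∧ dist X Y ≤ dist x y := by
  choose A B hA hB hAB using fun i => UnitAddCircle.exists_lift (x i) (y i)
  refine ⟨A, B, funext hA, funext hB, ?_⟩
  rw [dist_pi_le_iff dist_nonneg]
  intro i
  rw [Real.dist_eq, hAB i]
  exact dist_le_pi_dist x y i

/-- The set of coupling costs. -/
def CSet (μ ν : Measure (Torus d)) : Set ℝ :=
  { c | ∃ π : Measure (Torus d × Torus d), IsProbabilityMeasure π ∧ π.fst = μ ∧ π.snd = ν ∧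
      c = ∫ p, dist p.1 p.2 ∂π }

lemma W1_eq (μ ν : Measure (Torus d)) : W1 μ ν = sInf (CSet μ ν) := rfl

lemma integrable_of_cont {X : Type*} [MeasurableSpace X] [TopologicalSpace X] [CompactSpace X]
    [BorelSpace X] (μ : Measure X) [IsFiniteMeasure μ] {f : X → ℝ} (hf : Continuous f) :
    Integrable f μ :=
  hf.integrable_of_hasCompactSupport (HasCompactSupport.of_compactSpace f)

lemma CSet_nonneg {μ ν : Measure (Torus d)} {c : ℝ} (hc : c ∈ CSet μ ν) : 0 ≤ c := by
  obtain ⟨π, _, _, _, rfl⟩ := hc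
  exact integral_nonneg fun p => dist_nonneg

lemma CSet_bddBelow (μ ν : Measure (Torus d)) : BddBelow (CSet μ ν) :=
  ⟨0, fun _ hc => CSet_nonneg hc⟩

lemma CSet_nonempty (μ ν : Measure (Torus d)) [IsProbabilityMeasure μ] [IsProbabilityMeasure ν] :
    (CSet μ ν).Nonempty :=
  ⟨_, μ.prod ν, inferInstance, Measure.fst_prod, Measure.snd_prod, rfl⟩

lemma W1_nonneg (μ ν : Measure (Torus d)) [IsProbabilityMeasure μ] [IsProbabilityMeasure ν] :
    0 ≤ W1 μ ν :=
  le_csInf (CSet_nonempty μ ν) fun _ hc => CSet_nonneg hc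

lemma CSet_symm (μ ν : Measure (Torus d)) : CSet μ ν ⊆ CSet ν μ := by
  rintro c ⟨π, hπ, h1, h2, rfl⟩
  refine ⟨π.map Prod.swap, Measure.isProbabilityMeasure_map measurable_swap.aemeasurable,
    by simp [h2], by simp [h1], ?_⟩
  rw [integral_map measurable_swap.aemeasurable
    (continuous_fst.dist continuous_snd).aestronglyMeasurable]
  simp_rw [Prod.fst_swap, Prod.snd_swap, dist_comm]

lemma W1_symm (μ ν : Measure (Torus d)) : W1 μ ν = W1 ν μ := by
  have h := subset_antisymm (CSet_symm μ ν) (CSet_symm ν μ)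
  rw [W1_eq, W1_eq, h]

/-- Helper: bound something by `r * W1` from bounds against all coupling costs. -/
lemma le_mul_W1 {μ ν : Measure (Torus d)} [IsProbabilityMeasure μ] [IsProbabilityMeasure ν]
    {a r : ℝ} (hr : 0 ≤ r) (h : ∀ c ∈ CSet μ ν, a ≤ r * c) : a ≤ r * W1 μ ν := by
  rcases hr.eq_or_lt with h0 | hpos
  · obtain ⟨c, hc⟩ := CSet_nonempty μ ν
    have := h c hc
    rw [← h0] at this ⊢
    simpa using this
  · have hdiv : a / r ≤ sInf (CSet μ ν) := by
      refine le_csInf (CSet_nonempty μ ν) fun c hc => ?_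
      rw [div_le_iff₀ hpos]
      linarith [h c hc]
    rw [W1_eq, mul_comm]
    exact (div_le_iff₀ hpos).mp hdiv

/-- Kantorovich-type easy bound: integrals of a Lipschitz function differ by at most
`L * W1 μ ν`. -/
lemma abs_integral_sub_le {μ ν : Measure (Torus d)} [IsProbabilityMeasure μ]
    [IsProbabilityMeasure ν] {f : Torus d → ℝ} (hf : Continuous f) {L : ℝ} (hL : 0 ≤ L)
    (hlip : ∀ x y : Torus d, |f y - f x| ≤ L * dist x y) :
    |(∫ y, f y ∂ν) - ∫ y, f y ∂μ| ≤ L * W1 μ ν := by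
  refine le_mul_W1 hL ?_
  rintro c ⟨π, hπ, h1, h2, rfl⟩
  have hμ : (∫ y, f y ∂μ) = ∫ p, f p.1 ∂π := by
    rw [← h1, Measure.fst, integral_map measurable_fst.aemeasurable hf.aestronglyMeasurable]
  have hν : (∫ y, f y ∂ν) = ∫ p, f p.2 ∂π := by
    rw [← h2, Measure.snd, integral_map measurable_snd.aemeasurable hf.aestronglyMeasurable]
  have hι1 : Integrable (fun p : Torus d × Torus d => f p.1) π :=
    integrable_of_cont π (hf.comp continuous_fst)
  have hι2 : Integrable (fun p : Torus d × Torus d => f p.2) π :=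
    integrable_of_cont π (hf.comp continuous_snd)
  rw [hμ, hν, ← integral_sub hι2 hι1]
  calc |∫ p, (f p.2 - f p.1) ∂π| ≤ ∫ p, |f p.2 - f p.1| ∂π := by
        simpa [Real.norm_eq_abs] using
          norm_integral_le_integral_norm (μ := π) (fun p => f p.2 - f p.1)
  _ ≤ ∫ p, L * dist p.1 p.2 ∂π := by
      refine integral_mono (hι2.sub hι1).abs ((integrable_of_cont π
        (continuous_fst.dist continuous_snd)).const_mul L) fun p => hlip p.1 p.2
  _ = L * ∫ p, dist p.1 p.2 ∂π := integral_const_mul L _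

/-- The interpolation between probability measures. -/
def mix (μ ν : Measure (Torus d)) (s : ℝ) : Measure (Torus d) :=
  ENNReal.ofReal (1 - s) • μ + ENNReal.ofReal s • ν

lemma isProb_mix (μ ν : Measure (Torus d)) [IsProbabilityMeasure μ] [IsProbabilityMeasure ν]
    {s : ℝ} (h0 : 0 ≤ s) (h1 : s ≤ 1) : IsProbabilityMeasure (mix μ ν s) := by
  constructor
  rw [mix, Measure.add_apply, Measure.smul_apply, Measure.smul_apply, measure_univ, measure_univ,
    smul_eq_mul, smul_eq_mul, mul_one, mul_one, ← ENNReal.ofReal_add (by linarith) h0]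
  norm_num

lemma mix_zero (μ ν : Measure (Torus d)) : mix μ ν 0 = μ := by
  simp [mix]

lemma fst_smul (c : ℝ≥0∞) (π : Measure (Torus d × Torus d)) : (c • π).fst = c • π.fst :=
  Measure.map_smul c π Prod.fst

lemma snd_smul (c : ℝ≥0∞) (π : Measure (Torus d × Torus d)) : (c • π).snd = c • π.snd :=
  Measure.map_smul c π Prod.snd

lemma diag_measurable : Measurable (fun x : Torus d => (x, x)) :=
  measurable_id.prodMk measurable_id

lemma fst_diag (μ : Measure (Torus d)) : (μ.map (fun x => (x, x))).fst = μ := by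
  rw [Measure.fst, Measure.map_map measurable_fst diag_measurable]
  exact Measure.map_id

lemma snd_diag (μ : Measure (Torus d)) : (μ.map (fun x => (x, x))).snd = μ := by
  rw [Measure.snd, Measure.map_map measurable_snd diag_measurable]
  exact Measure.map_id

lemma cost_diag (μ : Measure (Torus d)) [IsProbabilityMeasure μ] :
    (∫ p, dist p.1 p.2 ∂(μ.map (fun x => (x, x)))) = 0 := by
  rw [integral_map diag_measurable.aemeasurable
    (continuous_fst.dist continuous_snd).aestronglyMeasurable]
  simp

lemma W1_mix_le (μ ν : Measure (Torus d)) [IsProbabilityMeasure μ] [IsProbabilityMeasure ν]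
    {s t : ℝ} (hs : 0 ≤ s) (hst : s ≤ t) (ht : t ≤ 1) :
    W1 (mix μ ν s) (mix μ ν t) ≤ (t - s) * W1 μ ν := by
  have := isProb_mix μ ν hs (hst.trans ht)
  have := isProb_mix μ ν (hs.trans hst) ht
  refine le_mul_W1 (by linarith) ?_
  rintro c ⟨π, hπ, h1, h2, rfl⟩
  set ρ : Measure (Torus d × Torus d) :=
    ENNReal.ofReal (1 - t) • (μ.map (fun x => (x, x))) +
      ENNReal.ofReal s • (ν.map (fun x => (x, x))) + ENNReal.ofReal (t - s) • π with hρ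
  have hprob : IsProbabilityMeasure ρ := by
    constructor
    have hμd : IsProbabilityMeasure (μ.map (fun x : Torus d => (x, x))) :=
      Measure.isProbabilityMeasure_map diag_measurable.aemeasurable
    have hνd : IsProbabilityMeasure (ν.map (fun x : Torus d => (x, x))) :=
      Measure.isProbabilityMeasure_map diag_measurable.aemeasurable
    rw [hρ, Measure.add_apply, Measure.add_apply, Measure.smul_apply, Measure.smul_apply,
      Measure.smul_apply, hμd.measure_univ, hνd.measure_univ, hπ.measure_univ,
      smul_eq_mul, smul_eq_mul, smul_eq_mul, mul_one, mul_one, mul_one,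
      ← ENNReal.ofReal_add (by linarith) hs, ← ENNReal.ofReal_add (by linarith) (by linarith)]
    norm_num
  have hfst : ρ.fst = mix μ ν s := by
    rw [hρ, Measure.fst_add, Measure.fst_add, fst_smul, fst_smul, fst_smul, fst_diag μ,
      fst_diag ν, h1, mix]
    have hre : ENNReal.ofReal (1 - t) • μ + ENNReal.ofReal s • ν + ENNReal.ofReal (t - s) • μ
        = (ENNReal.ofReal (1 - t) + ENNReal.ofReal (t - s)) • μ + ENNReal.ofReal s • ν := by
      rw [add_smul]; abel
    rw [hre, ← ENNReal.ofReal_add (by linarith) (by linarith)]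
    norm_num
  have hsnd : ρ.snd = mix μ ν t := by
    rw [hρ, Measure.snd_add, Measure.snd_add, snd_smul, snd_smul, snd_smul, snd_diag μ,
      snd_diag ν, h2, mix]
    have hre : ENNReal.ofReal (1 - t) • μ + ENNReal.ofReal s • ν + ENNReal.ofReal (t - s) • ν
        = ENNReal.ofReal (1 - t) • μ + (ENNReal.ofReal s + ENNReal.ofReal (t - s)) • ν := by
      rw [add_smul]; abel
    rw [hre, ← ENNReal.ofReal_add hs (by linarith)]
    norm_num
  have hcost : (∫ p, dist p.1 p.2 ∂ρ) = (t - s) * ∫ p, dist p.1 p.2 ∂π := by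
    have hc : Continuous (fun p : Torus d × Torus d => dist p.1 p.2) :=
      continuous_fst.dist continuous_snd
    rw [hρ, integral_add_measure, integral_add_measure, integral_smul_measure,
      integral_smul_measure, integral_smul_measure, cost_diag, cost_diag]
    · rw [smul_zero, smul_zero, ENNReal.toReal_ofReal (by linarith : (0:ℝ) ≤ t - s),
        smul_eq_mul]
      ring
    · have : IsProbabilityMeasure (μ.map (fun x : Torus d => (x, x))) :=
        Measure.isProbabilityMeasure_map diag_measurable.aemeasurable
      exact (integrable_of_cont _ hc).smul_measure ENNReal.ofReal_ne_top
    · have : IsProbabilityMeasure (ν.map (fun x : Torus d => (x, x))) :=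
        Measure.isProbabilityMeasure_map diag_measurable.aemeasurable
      exact (integrable_of_cont _ hc).smul_measure ENNReal.ofReal_ne_top
    · have h1 : IsProbabilityMeasure (μ.map (fun x : Torus d => (x, x))) :=
        Measure.isProbabilityMeasure_map diag_measurable.aemeasurable
      have h2 : IsProbabilityMeasure (ν.map (fun x : Torus d => (x, x))) :=
        Measure.isProbabilityMeasure_map diag_measurable.aemeasurable
      exact ((integrable_of_cont _ hc).smul_measure ENNReal.ofReal_ne_top).add_measure
        ((integrable_of_cont _ hc).smul_measure ENNReal.ofReal_ne_top)
    · exact (integrable_of_cont _ hc).smul_measure ENNReal.ofReal_ne_top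
  refine (csInf_le (CSet_bddBelow _ _) ⟨ρ, hprob, hfst, hsnd, rfl⟩).trans ?_
  rw [hcost]

/-- Lipschitz estimate on the torus for a difference of functions whose lifted derivatives
are close. -/
lemma lip_sub {f₁ f₂ : Torus d → ℝ}
    (h1 : ContDiff ℝ 1 (fun x : Fin d → ℝ => f₁ (TorusProj d x)))
    (h2 : ContDiff ℝ 1 (fun x : Fin d → ℝ => f₂ (TorusProj d x))) {L : ℝ}
    (hbound : ∀ z : Fin d → ℝ,
      ‖fderiv ℝ (fun z => f₁ (TorusProj d z)) z - fderiv ℝ (fun z => f₂ (TorusProj d z)) z‖ ≤ L)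
    (x y : Torus d) :
    |(f₁ y - f₂ y) - (f₁ x - f₂ x)| ≤ L * dist x y := by
  have hL : 0 ≤ L := le_trans (norm_nonneg _) (hbound 0)
  obtain ⟨X, Y, hX, hY, hXY⟩ := Torus.exists_lift x y
  set F : (Fin d → ℝ) → ℝ :=
    fun z => f₁ (TorusProj d z) - f₂ (TorusProj d z) with hF
  have hd1 : Differentiable ℝ (fun z : Fin d → ℝ => f₁ (TorusProj d z)) :=
    h1.differentiable one_ne_zero
  have hd2 : Differentiable ℝ (fun z : Fin d → ℝ => f₂ (TorusProj d z)) :=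
    h2.differentiable one_ne_zero
  have hdF : ∀ z, DifferentiableAt ℝ F z := fun z => (hd1 z).sub (hd2 z)
  have hfd : ∀ z, ‖fderiv ℝ F z‖ ≤ L := fun z => by
    rw [hF, fderiv_fun_sub (hd1 z) (hd2 z)]
    exact hbound z
  have hmv := convex_univ.norm_image_sub_le_of_norm_fderiv_le (fun z _ => hdF z)
    (fun z _ => hfd z) (Set.mem_univ X) (Set.mem_univ Y)
  have hFX : F X = f₁ x - f₂ x := by rw [hF]; simp only [hX]
  have hFY : F Y = f₁ y - f₂ y := by rw [hF]; simp only [hY]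
  have hnorm : ‖Y - X‖ ≤ dist x y := by
    rw [← dist_eq_norm, dist_comm]
    exact hXY
  calc |(f₁ y - f₂ y) - (f₁ x - f₂ x)| = ‖F Y - F X‖ := by
        rw [hFX, hFY, Real.norm_eq_abs]
  _ ≤ L * ‖Y - X‖ := hmv
  _ ≤ L * dist x y := mul_le_mul_of_nonneg_left hnorm hL

end SecondOrderTaylorAux

open SecondOrderTaylorAux in
/-- Second-order Taylor expansion via optimal transport: if `D = δΦ/δm` is a linear
functional derivative of `Φ` which is `C¹` in the space variable (through the canonical
projection `ℝ^d → 𝕋^d`) and the spatial derivative `∂_x D` is `K`-Lipschitz in `μ`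
w.r.t. `W₁`, then `|Φ(ν) − Φ(μ) − ∫ D(μ, y)(ν − μ)(dy)| ≤ K · W₁(μ, ν)²`
(i.e. the universal constant `C` may be taken equal to `1`). -/
theorem second_order_taylor_expansion {d : ℕ}
    (Φ : Measure (Torus d) → ℝ) (D : Measure (Torus d) → Torus d → ℝ) (K : ℝ)
    (hD_deriv : ∀ m m' : Measure (Torus d),
      IsProbabilityMeasure m → IsProbabilityMeasure m' →
      Φ m' - Φ m =
        ∫ s in (0:ℝ)..1,
          ((∫ y, D (ENNReal.ofReal (1 - s) • m + ENNReal.ofReal s • m') y ∂m') -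
            ∫ y, D (ENNReal.ofReal (1 - s) • m + ENNReal.ofReal s • m') y ∂m))
    (hD_cont : ∀ m : Measure (Torus d), IsProbabilityMeasure m → Continuous (D m))
    (hD_C1 : ∀ m : Measure (Torus d), IsProbabilityMeasure m →
      ContDiff ℝ 1 (fun x : Fin d → ℝ => D m (TorusProj d x)))
    (hD_lip : ∀ μ₁ μ₂ : Measure (Torus d),
      IsProbabilityMeasure μ₁ → IsProbabilityMeasure μ₂ →
      ∀ x : Fin d → ℝ,
        ‖fderiv ℝ (fun z => D μ₁ (TorusProj d z)) x -
          fderiv ℝ (fun z => D μ₂ (TorusProj d z)) x‖ ≤ K * W1 μ₁ μ₂)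
    (μ ν : Measure (Torus d)) [IsProbabilityMeasure μ] [IsProbabilityMeasure ν] :
    |Φ ν - Φ μ - ((∫ y, D μ y ∂ν) - ∫ y, D μ y ∂μ)| ≤ K * W1 μ ν ^ 2 := by
  have hKW : 0 ≤ K * W1 μ ν :=
    le_trans (norm_nonneg _) (hD_lip μ ν inferInstance inferInstance 0)
  have hW : 0 ≤ W1 μ ν := W1_nonneg μ ν
  set G : ℝ → ℝ := fun s => (∫ y, D (mix μ ν s) y ∂ν) - ∫ y, D (mix μ ν s) y ∂μ with hG
  have hΦ : Φ ν - Φ μ = ∫ s in (0:ℝ)..1, G s := hD_deriv μ ν inferInstance inferInstance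
  have hG0 : G 0 = (∫ y, D μ y ∂ν) - ∫ y, D μ y ∂μ := by
    rw [hG]
    simp only [mix_zero]
  have key : ∀ s t : ℝ, 0 ≤ s → s ≤ t → t ≤ 1 →
      |G t - G s| ≤ ((t - s) * (K * W1 μ ν)) * W1 μ ν := by
    intro s t hs hst ht
    have hps : IsProbabilityMeasure (mix μ ν s) := isProb_mix μ ν hs (hst.trans ht)
    have hpt : IsProbabilityMeasure (mix μ ν t) := isProb_mix μ ν (hs.trans hst) ht
    set f : Torus d → ℝ := fun y => D (mix μ ν t) y - D (mix μ ν s) y with hf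
    have hfc : Continuous f := (hD_cont _ hpt).sub (hD_cont _ hps)
    have hGdiff : G t - G s = (∫ y, f y ∂ν) - ∫ y, f y ∂μ := by
      rw [hG, hf]
      rw [integral_sub (integrable_of_cont ν (hD_cont _ hpt))
        (integrable_of_cont ν (hD_cont _ hps)),
        integral_sub (integrable_of_cont μ (hD_cont _ hpt))
        (integrable_of_cont μ (hD_cont _ hps))]
      ring
    have hL0 : 0 ≤ K * W1 (mix μ ν t) (mix μ ν s) :=
      le_trans (norm_nonneg _) (hD_lip _ _ hpt hps 0)
    have hlip : ∀ x y : Torus d, |f y - f x| ≤ (K * W1 (mix μ ν t) (mix μ ν s)) * dist x y := by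
      intro x y
      exact lip_sub (hD_C1 _ hpt) (hD_C1 _ hps) (hD_lip _ _ hpt hps) x y
    have h1 : |G t - G s| ≤ (K * W1 (mix μ ν t) (mix μ ν s)) * W1 μ ν := by
      rw [hGdiff]
      exact abs_integral_sub_le hfc hL0 hlip
    have hLle : K * W1 (mix μ ν t) (mix μ ν s) ≤ (t - s) * (K * W1 μ ν) := by
      rcases le_or_gt 0 K with hK | hK
      · rw [W1_symm (mix μ ν t) (mix μ ν s)]
        calc K * W1 (mix μ ν s) (mix μ ν t) ≤ K * ((t - s) * W1 μ ν) :=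
              mul_le_mul_of_nonneg_left (W1_mix_le μ ν hs hst ht) hK
        _ = (t - s) * (K * W1 μ ν) := by ring
      · have hW0 : W1 μ ν = 0 := by nlinarith
        have hmix0 : W1 (mix μ ν t) (mix μ ν s) = 0 := by
          refine le_antisymm ?_ (W1_nonneg _ _)
          rw [W1_symm (mix μ ν t) (mix μ ν s)]
          calc W1 (mix μ ν s) (mix μ ν t) ≤ (t - s) * W1 μ ν := W1_mix_le μ ν hs hst ht
          _ = 0 := by rw [hW0]; ring
        rw [hmix0, hW0]
        simp
    calc |G t - G s| ≤ (K * W1 (mix μ ν t) (mix μ ν s)) * W1 μ ν := h1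
    _ ≤ ((t - s) * (K * W1 μ ν)) * W1 μ ν := mul_le_mul_of_nonneg_right hLle hW
  have hC : 0 ≤ K * W1 μ ν * W1 μ ν := mul_nonneg hKW hW
  have hContOn : ContinuousOn G (Set.uIcc (0:ℝ) 1) := by
    rw [Set.uIcc_of_le zero_le_one]
    have hlipG : LipschitzOnWith (Real.toNNReal (K * W1 μ ν * W1 μ ν)) G (Set.Icc 0 1) := by
      refine LipschitzOnWith.of_dist_le_mul fun a ha b hb => ?_
      rw [Real.dist_eq, Real.dist_eq, Real.coe_toNNReal _ hC]
      rcases le_total a b with hab | hab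
      · have hk := key a b ha.1 hab hb.2
        have habs : |a - b| = b - a := by
          rw [abs_sub_comm]; exact abs_of_nonneg (by linarith)
        rw [abs_sub_comm (G a) (G b)]
        calc |G b - G a| ≤ (b - a) * (K * W1 μ ν) * W1 μ ν := hk
        _ = K * W1 μ ν * W1 μ ν * |a - b| := by rw [habs]; ring
      · have hk := key b a hb.1 hab ha.2
        have habs : |a - b| = a - b := abs_of_nonneg (by linarith)
        calc |G a - G b| ≤ (a - b) * (K * W1 μ ν) * W1 μ ν := hk
        _ = K * W1 μ ν * W1 μ ν * |a - b| := by rw [habs]; ring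
    exact hlipG.continuousOn
  have hInt : IntervalIntegrable G MeasureTheory.volume 0 1 := hContOn.intervalIntegrable
  have hsplit : Φ ν - Φ μ - G 0 = ∫ s in (0:ℝ)..1, (G s - G 0) := by
    rw [hΦ, intervalIntegral.integral_sub hInt intervalIntegrable_const,
      intervalIntegral.integral_const]
    simp
  have hbound : ∀ s ∈ Set.uIoc (0:ℝ) 1, ‖G s - G 0‖ ≤ K * W1 μ ν * W1 μ ν := by
    intro s hs
    rw [Set.uIoc_of_le zero_le_one] at hs
    have h := key 0 s le_rfl hs.1.le hs.2
    rw [Real.norm_eq_abs]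
    have h2 : ((s - 0) * (K * W1 μ ν)) * W1 μ ν ≤ K * W1 μ ν * W1 μ ν := by
      nlinarith [hs.1.le, hs.2]
    linarith
  have hfin := intervalIntegral.norm_integral_le_of_norm_le_const hbound
  rw [← hG0, hsplit]
  rw [Real.norm_eq_abs] at hfin
  calc |∫ s in (0:ℝ)..1, (G s - G 0)| ≤ K * W1 μ ν * W1 μ ν * |1 - 0| := hfin
  _ = K * W1 μ ν ^ 2 := by norm_num; ring
end
end
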